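/- arXiv:2410.17503 — 2 statements merged into one kernel-verified Lean document; each statement's English description precedes it below -/
import Mathlib

section
/- Fix nonempty finite sets Ω and A, a finite message set M with |M| > max{|Ω|, |A|}, and an interior prior μ₀ on Ω. Suppose the environment (u_S, u_R) satisfies scant-indifferences. If a profile (σ, ρ) is R-BR and U_S(σ, ρ) equals the persuasion payoff, then ρ is pure-on-path: for every on-path message m ∈ M_σ, the distribution ρ(·|m) is degenerate. -/
open MeasureTheory

namespace KL

/-- `f` is a probability distribution on the finite type `X`. -/
def IsDist {X : Type} [Fintype X] (f : X → ℝ) : Prop :=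
  (∀ x, 0 ≤ f x) ∧ ∑ x, f x = 1

/-- `μ₀` is an interior prior on `Ω`. -/
def IsPrior {Ω : Type} [Fintype Ω] (μ₀ : Ω → ℝ) : Prop :=
  (∀ ω, 0 < μ₀ ω) ∧ ∑ ω, μ₀ ω = 1

variable {Ω A M : Type} [Fintype Ω] [Fintype A] [Fintype M]

/-- A messaging strategy: a distribution over messages in each state. -/
def IsMsg (σ : Ω → M → ℝ) : Prop := ∀ ω, IsDist (σ ω)

/-- An action strategy: a distribution over actions after each message. -/
def IsAct (ρ : M → A → ℝ) : Prop := ∀ m, IsDist (ρ m)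

/-- Expected payoff of a profile `(σ, ρ)` for utility `u`. -/
def U (μ₀ : Ω → ℝ) (u : A × Ω → ℝ) (σ : Ω → M → ℝ) (ρ : M → A → ℝ) : ℝ :=
  ∑ ω, ∑ m, ∑ a, μ₀ ω * σ ω m * ρ m a * u (a, ω)

/-- Sender best response. -/
def SBR (μ₀ : Ω → ℝ) (uS : A × Ω → ℝ) (σ : Ω → M → ℝ) (ρ : M → A → ℝ) : Prop :=
  ∀ σ' : Ω → M → ℝ, IsMsg σ' → U μ₀ uS σ' ρ ≤ U μ₀ uS σ ρ

/-- Receiver best response. -/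
def RBR (μ₀ : Ω → ℝ) (uR : A × Ω → ℝ) (σ : Ω → M → ℝ) (ρ : M → A → ℝ) : Prop :=
  ∀ ρ' : M → A → ℝ, IsAct ρ' → U μ₀ uR σ ρ' ≤ U μ₀ uR σ ρ

/-- A cheap-talk equilibrium: a profile of valid strategies that is S-BR and R-BR. -/
def CTEq (μ₀ : Ω → ℝ) (uS uR : A × Ω → ℝ) (σ : Ω → M → ℝ) (ρ : M → A → ℝ) : Prop :=
  IsMsg σ ∧ IsAct ρ ∧ SBR μ₀ uS σ ρ ∧ RBR μ₀ uR σ ρ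

/-- A persuasion profile: a profile of valid strategies that is R-BR. -/
def PersProfile (μ₀ : Ω → ℝ) (uR : A × Ω → ℝ) (σ : Ω → M → ℝ) (ρ : M → A → ℝ) : Prop :=
  IsMsg σ ∧ IsAct ρ ∧ RBR μ₀ uR σ ρ

/-- The cheap-talk payoff: the maximal Sender payoff over cheap-talk equilibria. -/
noncomputable def ctPayoff (μ₀ : Ω → ℝ) (uS uR : A × Ω → ℝ) : ℝ :=
  sSup {x | ∃ (σ : Ω → M → ℝ) (ρ : M → A → ℝ), CTEq μ₀ uS uR σ ρ ∧ x = U μ₀ uS σ ρ}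

/-- The (Bayesian) persuasion payoff: the maximal Sender payoff over persuasion profiles. -/
noncomputable def persPayoff (μ₀ : Ω → ℝ) (uS uR : A × Ω → ℝ) : ℝ :=
  sSup {x | ∃ (σ : Ω → M → ℝ) (ρ : M → A → ℝ), PersProfile μ₀ uR σ ρ ∧ x = U μ₀ uS σ ρ}

/-- A messaging strategy is partitional if it is deterministic in every state. -/
def Partitional (σ : Ω → M → ℝ) : Prop := ∀ ω, ∃ m, σ ω m = 1

/-- The partitional persuasion payoff. -/
noncomputable def partPersPayoff (μ₀ : Ω → ℝ) (uS uR : A × Ω → ℝ) : ℝ :=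
  sSup {x | ∃ (σ : Ω → M → ℝ) (ρ : M → A → ℝ),
    Partitional σ ∧ PersProfile μ₀ uR σ ρ ∧ x = U μ₀ uS σ ρ}

/-- The partitional cheap-talk payoff. -/
noncomputable def partCtPayoff (μ₀ : Ω → ℝ) (uS uR : A × Ω → ℝ) : ℝ :=
  sSup {x | ∃ (σ : Ω → M → ℝ) (ρ : M → A → ℝ),
    Partitional σ ∧ CTEq μ₀ uS uR σ ρ ∧ x = U μ₀ uS σ ρ}

/-- A message is on-path if it is sent with positive probability in some state. -/
def OnPath (σ : Ω → M → ℝ) (m : M) : Prop := ∃ ω, 0 < σ ω m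

/-- A pure action strategy: degenerate after every message. -/
def IsPureAct (ρ : M → A → ℝ) : Prop := ∀ m, ∃ a, ρ m a = 1

/-- A pure-on-path action strategy: degenerate after every on-path message. -/
def PureOnPath (σ : Ω → M → ℝ) (ρ : M → A → ℝ) : Prop :=
  ∀ m, OnPath σ m → ∃ a, ρ m a = 1

/-- The posterior belief induced by message `m`. -/
noncomputable def post (μ₀ : Ω → ℝ) (σ : Ω → M → ℝ) (m : M) (ω : Ω) : ℝ :=
  μ₀ ω * σ ω m / ∑ ω', μ₀ ω' * σ ω' m

/-- The cube of environments `[0,1]^(2|A||Ω|)`. -/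
def EnvCube (Ω A : Type) : Set ((A × Ω → ℝ) × (A × Ω → ℝ)) :=
  {e | (∀ p, e.1 p ∈ Set.Icc (0 : ℝ) 1) ∧ ∀ p, e.2 p ∈ Set.Icc (0 : ℝ) 1}

/-- The cube of transparent environments `[0,1]^(|A|(|Ω|+1))`, points `(v, u_R)`. -/
def TransCube (Ω A : Type) : Set ((A → ℝ) × (A × Ω → ℝ)) :=
  {e | (∀ a, e.1 a ∈ Set.Icc (0 : ℝ) 1) ∧ ∀ p, e.2 p ∈ Set.Icc (0 : ℝ) 1}

open Classical in
/-- The expanded-indifference matrix `T^i`: rows `u_S(a_j,·) − u_S(a_i,·)` for `j ≠ i`,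
rows `u_R(a_j,·) − u_R(a_i,·)` for `j ≠ i`, and the rows of the identity matrix. -/
noncomputable def TMat (uS uR : A × Ω → ℝ) (i : A) :
    Matrix (({j : A // j ≠ i} ⊕ {j : A // j ≠ i}) ⊕ Ω) Ω ℝ :=
  Matrix.of fun r ω =>
    match r with
    | Sum.inl (Sum.inl j) => uS (j.1, ω) - uS (i, ω)
    | Sum.inl (Sum.inr j) => uR (j.1, ω) - uR (i, ω)
    | Sum.inr ω' => if ω' = ω then 1 else 0

/-- Scant indifferences: every row-submatrix of every expanded-indifference matrix has
full rank (rank equal to the minimum of the number of rows and the number of columns). -/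
def ScantIndiff (uS uR : A × Ω → ℝ) : Prop :=
  ∀ i : A, ∀ s : Finset (({j : A // j ≠ i} ⊕ {j : A // j ≠ i}) ⊕ Ω),
    ((TMat uS uR i).submatrix (fun r : {x // x ∈ s} => r.1) id).rank
      = min s.card (Fintype.card Ω)

open Classical in
/-- The set `Ω_a` of states in which `a` is an ideal action for Sender. -/
noncomputable def idealStates (uS : A × Ω → ℝ) (a : A) : Finset Ω :=
  Finset.univ.filter fun ω => ∀ b, uS (b, ω) ≤ uS (a, ω)

/-- Felicitous environment. -/
def Felicitous (μ₀ : Ω → ℝ) (uS uR : A × Ω → ℝ) : Prop :=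
  ∀ a a' : A, 0 ≤ ∑ ω ∈ idealStates uS a, μ₀ ω * (uR (a, ω) - uR (a', ω))

/-- Partitional-unique-response: for every nonempty subset of states, Receiver's
expected payoff has a unique maximizer. -/
def PUR (μ₀ : Ω → ℝ) (uR : A × Ω → ℝ) : Prop :=
  ∀ S : Finset Ω, S.Nonempty →
    ∃! a : A, ∀ b : A, ∑ ω ∈ S, μ₀ ω * uR (b, ω) ≤ ∑ ω ∈ S, μ₀ ω * uR (a, ω)

/-- Jointly-inclusive environment: each action is the unique ideal action of both
players in some state. -/
def JointlyInclusive (uS uR : A × Ω → ℝ) : Prop :=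
  ∀ a : A, ∃ ω : Ω,
    (∀ b, b ≠ a → uS (b, ω) < uS (a, ω)) ∧ ∀ b, b ≠ a → uR (b, ω) < uR (a, ω)


section Aux

variable {Ω A M : Type} [Fintype Ω] [Fintype A] [Fintype M]

private lemma U_rw (μ₀ : Ω → ℝ) (u : A × Ω → ℝ) (σ : Ω → M → ℝ) (ρ : M → A → ℝ) :
    U μ₀ u σ ρ = ∑ m, ∑ a, ρ m a * ∑ ω, μ₀ ω * σ ω m * u (a, ω) := by
  unfold U
  rw [Finset.sum_comm]
  refine Finset.sum_congr rfl fun m _ => ?_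
  rw [Finset.sum_comm]
  refine Finset.sum_congr rfl fun a _ => ?_
  rw [Finset.mul_sum]
  exact Finset.sum_congr rfl fun ω _ => by ring

private lemma U_le_one (μ₀ : Ω → ℝ) (hμ : IsPrior μ₀) (u : A × Ω → ℝ)
    (hu : ∀ p, u p ∈ Set.Icc (0 : ℝ) 1) (σ : Ω → M → ℝ) (ρ : M → A → ℝ)
    (hσ : IsMsg σ) (hρ : IsAct ρ) : U μ₀ u σ ρ ≤ 1 := by
  have h1 : U μ₀ u σ ρ ≤ ∑ ω, ∑ m, ∑ a, μ₀ ω * σ ω m * ρ m a := by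
    refine Finset.sum_le_sum fun ω _ => Finset.sum_le_sum fun m _ =>
      Finset.sum_le_sum fun a _ => ?_
    have hnn : 0 ≤ μ₀ ω * σ ω m * ρ m a :=
      mul_nonneg (mul_nonneg (hμ.1 ω).le ((hσ ω).1 m)) ((hρ m).1 a)
    calc μ₀ ω * σ ω m * ρ m a * u (a, ω) ≤ μ₀ ω * σ ω m * ρ m a * 1 :=
          mul_le_mul_of_nonneg_left (hu (a, ω)).2 hnn
      _ = μ₀ ω * σ ω m * ρ m a := mul_one _
  have h2 : ∑ ω, ∑ m, ∑ a, μ₀ ω * σ ω m * ρ m a = 1 := by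
    have : ∀ ω : Ω, ∑ m, ∑ a, μ₀ ω * σ ω m * ρ m a = μ₀ ω := by
      intro ω
      have : ∀ m : M, ∑ a, μ₀ ω * σ ω m * ρ m a = μ₀ ω * σ ω m := by
        intro m; rw [← Finset.mul_sum, (hρ m).2, mul_one]
      rw [Finset.sum_congr rfl fun m _ => this m, ← Finset.mul_sum, (hσ ω).2, mul_one]
    rw [Finset.sum_congr rfl fun ω _ => this ω, hμ.2]
  linarith

/-- If `ρ` is optimal pointwise wherever it puts positive probability, it is an R-BR. -/
private lemma rbr_of_opt (μ₀ : Ω → ℝ) (uR : A × Ω → ℝ) (σ : Ω → M → ℝ) (ρ : M → A → ℝ)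
    (hρ : IsAct ρ)
    (h : ∀ m a, 0 < ρ m a → ∀ b, ∑ ω, μ₀ ω * σ ω m * uR (b, ω) ≤
      ∑ ω, μ₀ ω * σ ω m * uR (a, ω)) :
    RBR μ₀ uR σ ρ := by
  intro ρ' hρ'
  rw [U_rw, U_rw]
  refine Finset.sum_le_sum fun m _ => ?_
  set g : A → ℝ := fun c => ∑ ω, μ₀ ω * σ ω m * uR (c, ω) with hg
  have hVb : ∀ b : A, g b ≤ ∑ a, ρ m a * g a := by
    intro b
    have hb : ∀ a : A, ρ m a * g b ≤ ρ m a * g a := by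
      intro a
      rcases eq_or_lt_of_le ((hρ m).1 a) with h0 | h0
      · rw [← h0]; simp
      · exact mul_le_mul_of_nonneg_left (h m a h0 b) ((hρ m).1 a)
    calc g b = ∑ a, ρ m a * g b := by rw [← Finset.sum_mul, (hρ m).2, one_mul]
      _ ≤ ∑ a, ρ m a * g a := Finset.sum_le_sum fun a _ => hb a
  calc ∑ a, ρ' m a * g a ≤ ∑ a, ρ' m a * ∑ b, ρ m b * g b := by
        refine Finset.sum_le_sum fun a _ => mul_le_mul_of_nonneg_left (hVb a) ((hρ' m).1 a)
    _ = ∑ a, ρ m a * g a := by rw [← Finset.sum_mul, (hρ' m).2, one_mul]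

/-- R-BR implies per-message optimality at every action played with positive probability. -/
private lemma rbr_opt [Nonempty A] (μ₀ : Ω → ℝ) (uR : A × Ω → ℝ) (σ : Ω → M → ℝ)
    (ρ : M → A → ℝ) (hρ : IsAct ρ) (hRBR : RBR μ₀ uR σ ρ) (m : M) (a : A)
    (ha : 0 < ρ m a) (b : A) :
    ∑ ω, μ₀ ω * σ ω m * uR (b, ω) ≤ ∑ ω, μ₀ ω * σ ω m * uR (a, ω) := by
  classical
  set g : A → ℝ := fun c => ∑ ω, μ₀ ω * σ ω m * uR (c, ω) with hg
  obtain ⟨bs, _, hbs⟩ := Finset.exists_max_image Finset.univ g ⟨Classical.arbitrary A,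
    Finset.mem_univ _⟩
  have hbs' : ∀ c : A, g c ≤ g bs := fun c => hbs c (Finset.mem_univ c)
  set ρ' : M → A → ℝ := Function.update ρ m (fun c => if c = bs then 1 else 0) with hρ'def
  have hρ' : IsAct ρ' := by
    intro m'
    by_cases hm : m' = m
    · subst hm
      constructor
      · intro a'; rw [hρ'def, Function.update_self]; positivity
      · rw [hρ'def, Function.update_self]; simp
    · rw [hρ'def, Function.update_of_ne hm]; exact hρ m'
  have hle := hRBR ρ' hρ'
  rw [U_rw, U_rw] at hle
  have hsplit : ∀ τ : M → A → ℝ,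
      ∑ m', ∑ a', τ m' a' * ∑ ω, μ₀ ω * σ ω m' * uR (a', ω)
        = (∑ a', τ m a' * ∑ ω, μ₀ ω * σ ω m * uR (a', ω))
          + ∑ m' ∈ Finset.univ.erase m, ∑ a', τ m' a' * ∑ ω, μ₀ ω * σ ω m' * uR (a', ω) :=
    fun τ => (Finset.add_sum_erase _ _ (Finset.mem_univ m)).symm
  rw [hsplit ρ, hsplit ρ'] at hle
  have herase : ∀ m' ∈ Finset.univ.erase m,
      ∑ a', ρ' m' a' * ∑ ω, μ₀ ω * σ ω m' * uR (a', ω)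
        = ∑ a', ρ m' a' * ∑ ω, μ₀ ω * σ ω m' * uR (a', ω) := by
    intro m' hm'
    rw [hρ'def, Function.update_of_ne (Finset.ne_of_mem_erase hm')]
  rw [Finset.sum_congr rfl herase] at hle
  have hpure : ∑ a', ρ' m a' * ∑ ω, μ₀ ω * σ ω m * uR (a', ω) = g bs := by
    rw [hρ'def]
    simp [Function.update_self, ite_mul, hg]
  rw [hpure] at hle
  have hle2 : ∑ a', ρ m a' * g a' ≤ g bs := by
    calc ∑ a', ρ m a' * g a' ≤ ∑ a', ρ m a' * g bs :=
          Finset.sum_le_sum fun a' _ => mul_le_mul_of_nonneg_left (hbs' a') ((hρ m).1 a')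
      _ = g bs := by rw [← Finset.sum_mul, (hρ m).2, one_mul]
  have heq : ∑ a', ρ m a' * g a' = g bs := le_antisymm hle2 (by linarith)
  have hzero : ∀ a' ∈ Finset.univ, ρ m a' * (g bs - g a') = 0 := by
    have hsum0 : ∑ a', ρ m a' * (g bs - g a') = 0 := by
      have : ∑ a', ρ m a' * (g bs - g a')
          = (∑ a', ρ m a' * g bs) - ∑ a', ρ m a' * g a' := by
        rw [← Finset.sum_sub_distrib]
        exact Finset.sum_congr rfl fun a' _ => by ring
      rw [this, ← Finset.sum_mul, (hρ m).2, one_mul, heq, sub_self]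
    refine (Finset.sum_eq_zero_iff_of_nonneg fun a' _ => ?_).mp hsum0
    exact mul_nonneg ((hρ m).1 a') (by linarith [hbs' a'])
  have hga : g a = g bs := by
    have := hzero a (Finset.mem_univ a)
    rcases mul_eq_zero.mp this with h0 | h0
    · exact absurd h0 ha.ne'
    · linarith
  rw [show (∑ ω, μ₀ ω * σ ω m * uR (a, ω)) = g a from rfl, hga]
  exact hbs' b

private lemma exists_eps {ι : Type} [Fintype ι] (p q : ι → ℝ) (hp : ∀ i, 0 < p i) :
    ∃ ε : ℝ, 0 < ε ∧ ∀ i, ε * q i ≤ p i := by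
  classical
  by_cases h : Nonempty ι
  · have hne : (Finset.univ : Finset ι).Nonempty := Finset.univ_nonempty
    refine ⟨Finset.univ.inf' hne (fun i => p i / max (q i) 1), ?_, ?_⟩
    · rw [Finset.lt_inf'_iff]
      intro i _
      exact div_pos (hp i) (lt_of_lt_of_le one_pos (le_max_right _ _))
    · intro i
      have hmax : (0 : ℝ) < max (q i) 1 := lt_of_lt_of_le one_pos (le_max_right _ _)
      have hεpos : 0 < Finset.univ.inf' hne (fun i => p i / max (q i) 1) := by
        rw [Finset.lt_inf'_iff]
        intro j _
        exact div_pos (hp j) (lt_of_lt_of_le one_pos (le_max_right _ _))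
      have hle : Finset.univ.inf' hne (fun i => p i / max (q i) 1) ≤ p i / max (q i) 1 :=
        Finset.inf'_le _ (Finset.mem_univ i)
      calc Finset.univ.inf' hne (fun i => p i / max (q i) 1) * q i
          ≤ Finset.univ.inf' hne (fun i => p i / max (q i) 1) * max (q i) 1 :=
            mul_le_mul_of_nonneg_left (le_max_left _ _) hεpos.le
        _ ≤ (p i / max (q i) 1) * max (q i) 1 := mul_le_mul_of_nonneg_right hle hmax.le
        _ = p i := div_mul_cancel₀ _ hmax.ne'
  · exact ⟨1, one_pos, fun i => absurd ⟨i⟩ h⟩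

private lemma sum_extend [DecidableEq M] (f : A → M) (hf : Function.Injective f) (g : A → ℝ) :
    ∑ m, Function.extend f g (fun _ => 0) m = ∑ a, g a := by
  have h1 : ∑ m ∈ Finset.univ.image f, Function.extend f g (fun _ => 0) m
      = ∑ m, Function.extend f g (fun _ => 0) m := by
    refine Finset.sum_subset (Finset.subset_univ _) fun m _ hm => ?_
    rw [Function.extend_apply']
    intro ⟨a, ha⟩
    exact hm (Finset.mem_image.mpr ⟨a, Finset.mem_univ a, ha⟩)
  rw [← h1, Finset.sum_image (fun a _ b _ h => hf h)]
  exact Finset.sum_congr rfl fun a _ => hf.extend_apply g _ a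

private lemma ker_char {RI : Type} [Fintype RI]
    (T : Matrix RI Ω ℝ) (t : Finset RI) (v : Ω → ℝ) :
    (T.submatrix (fun x : {x // x ∈ t} => x.1) id).mulVecLin v = 0 ↔
      ∀ i ∈ t, ∑ ω, T i ω * v ω = 0 := by
  rw [Matrix.mulVecLin_apply]
  constructor
  · intro hv i hi
    have := congrFun hv ⟨i, hi⟩
    simpa [Matrix.mulVec, dotProduct] using this
  · intro hv
    funext i
    simpa [Matrix.mulVec, dotProduct] using hv i.1 i.2

private lemma exists_delta {RI : Type} [Fintype RI] [DecidableEq RI]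
    (T : Matrix RI Ω ℝ) (s : Finset RI) (r : RI) (hr : r ∉ s)
    (hrank1 : (T.submatrix (fun x : {x // x ∈ s} => x.1) id).rank = min s.card (Fintype.card Ω))
    (hrank2 : (T.submatrix (fun x : {x // x ∈ insert r s} => x.1) id).rank
      = min (insert r s).card (Fintype.card Ω))
    (x : Ω → ℝ) (hx : x ≠ 0) (hxker : ∀ i ∈ s, ∑ ω, T i ω * x ω = 0) :
    ∃ δ : Ω → ℝ, (∀ i ∈ s, ∑ ω, T i ω * δ ω = 0) ∧ ∑ ω, T r ω * δ ω ≠ 0 := by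
  classical
  set B1 := T.submatrix (fun x : {x // x ∈ s} => x.1) id with hB1
  set B2 := T.submatrix (fun x : {x // x ∈ insert r s} => x.1) id with hB2
  have hxmem : x ∈ LinearMap.ker B1.mulVecLin := by
    rw [LinearMap.mem_ker, hB1, ker_char]; exact hxker
  have hnt : Nontrivial (LinearMap.ker B1.mulVecLin) :=
    ⟨⟨x, hxmem⟩, 0, by simpa [Subtype.ext_iff] using hx⟩
  have hkerpos : 0 < Module.finrank ℝ (LinearMap.ker B1.mulVecLin) :=
    Module.finrank_pos_iff.mpr hnt
  have hrn1 : B1.rank + Module.finrank ℝ (LinearMap.ker B1.mulVecLin) = Fintype.card Ω := by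
    rw [Matrix.rank, LinearMap.finrank_range_add_finrank_ker B1.mulVecLin]
    exact Module.finrank_pi ℝ
  have hrn2 : B2.rank + Module.finrank ℝ (LinearMap.ker B2.mulVecLin) = Fintype.card Ω := by
    rw [Matrix.rank, LinearMap.finrank_range_add_finrank_ker B2.mulVecLin]
    exact Module.finrank_pi ℝ
  have hcard : s.card < Fintype.card Ω := by
    rcases le_or_gt (Fintype.card Ω) s.card with h | h
    · exfalso
      rw [min_eq_right h] at hrank1
      omega
    · exact h
  by_contra hcon
  push_neg at hcon
  have hkereq : LinearMap.ker B1.mulVecLin = LinearMap.ker B2.mulVecLin := by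
    ext δ
    rw [LinearMap.mem_ker, LinearMap.mem_ker, hB1, hB2, ker_char, ker_char]
    constructor
    · intro h i hi
      rcases Finset.mem_insert.mp hi with h' | h'
      · subst h'; exact hcon δ h
      · exact h i h'
    · intro h i hi
      exact h i (Finset.mem_insert_of_mem hi)
  rw [hrank1, min_eq_left hcard.le] at hrn1
  rw [hrank2, Finset.card_insert_of_notMem hr, min_eq_left (by omega)] at hrn2
  rw [hkereq] at hrn1
  omega

private lemma sum_mul_sub (v p q : Ω → ℝ) :
    ∑ ω, v ω * (p ω - q ω) = ∑ ω, v ω * p ω - ∑ ω, v ω * q ω := by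
  rw [← Finset.sum_sub_distrib]
  exact Finset.sum_congr rfl fun ω _ => mul_sub _ _ _

private lemma U_update [DecidableEq M] (μ₀ : Ω → ℝ) (u : A × Ω → ℝ) (σ : Ω → M → ℝ)
    (ρ : M → A → ℝ) (m₀ : M) (κ : A → ℝ) :
    U μ₀ u σ (Function.update ρ m₀ κ) =
      U μ₀ u σ ρ - (∑ a, ρ m₀ a * ∑ ω, μ₀ ω * σ ω m₀ * u (a, ω))
        + ∑ a, κ a * ∑ ω, μ₀ ω * σ ω m₀ * u (a, ω) := by
  rw [U_rw, U_rw]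
  have hsplit : ∀ τ : M → A → ℝ,
      (∑ m, ∑ a, τ m a * ∑ ω, μ₀ ω * σ ω m * u (a, ω))
        = (∑ a, τ m₀ a * ∑ ω, μ₀ ω * σ ω m₀ * u (a, ω))
          + ∑ m ∈ Finset.univ.erase m₀, ∑ a, τ m a * ∑ ω, μ₀ ω * σ ω m * u (a, ω) :=
    fun τ => (Finset.add_sum_erase _ _ (Finset.mem_univ m₀)).symm
  rw [hsplit, hsplit]
  have h1 : ∀ m ∈ Finset.univ.erase m₀,
      (∑ a, (Function.update ρ m₀ κ) m a * ∑ ω, μ₀ ω * σ ω m * u (a, ω))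
        = ∑ a, ρ m a * ∑ ω, μ₀ ω * σ ω m * u (a, ω) := fun m hm => by
    rw [Function.update_of_ne (Finset.ne_of_mem_erase hm)]
  rw [Finset.sum_congr rfl h1, Function.update_self]
  ring

end Aux

/-- Lemma 5 (Kamenica–Lin): in a scant-indifferences environment, any R-BR profile
attaining the persuasion payoff has a Receiver strategy that is pure on path. -/
theorem receiver_pure_on_path
    (Ω A M : Type) [Fintype Ω] [Fintype A] [Fintype M]
    [Nonempty Ω] [Nonempty A]
    (hM : max (Fintype.card Ω) (Fintype.card A) < Fintype.card M)
    (μ₀ : Ω → ℝ) (hμ : IsPrior μ₀)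
    (uS uR : A × Ω → ℝ)
    (huS : ∀ p, uS p ∈ Set.Icc (0 : ℝ) 1) (huR : ∀ p, uR p ∈ Set.Icc (0 : ℝ) 1)
    (hscant : ScantIndiff uS uR)
    (σ : Ω → M → ℝ) (ρ : M → A → ℝ)
    (hσ : IsMsg σ) (hρ : IsAct ρ)
    (hRBR : RBR μ₀ uR σ ρ)
    (hopt : U μ₀ uS σ ρ = persPayoff (M := M) μ₀ uS uR) :
    PureOnPath σ ρ := by
  classical
  intro m₀ hon
  by_contra hnot
  -- boundedness of the persuasion-payoff set, and the key optimality inequality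
  have hbdd : BddAbove {x | ∃ (σ' : Ω → M → ℝ) (ρ' : M → A → ℝ),
      PersProfile μ₀ uR σ' ρ' ∧ x = U μ₀ uS σ' ρ'} := by
    refine ⟨1, fun v hv => ?_⟩
    obtain ⟨σ₁, ρ₁, ⟨h1, h2, _⟩, hv⟩ := hv
    rw [hv]
    exact U_le_one μ₀ hμ uS huS σ₁ ρ₁ h1 h2
  have hkey : ∀ (σ' : Ω → M → ℝ) (ρ' : M → A → ℝ), IsMsg σ' → IsAct ρ' →
      RBR μ₀ uR σ' ρ' → U μ₀ uS σ' ρ' ≤ U μ₀ uS σ ρ := by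
    intro σ' ρ' h1 h2 h3
    rw [hopt, persPayoff]
    exact le_csSup hbdd ⟨σ', ρ', ⟨h1, h2, h3⟩, rfl⟩
  -- notation
  set x : Ω → ℝ := fun ω => μ₀ ω * σ ω m₀ with hxdef
  have hxnn : ∀ ω, 0 ≤ x ω := fun ω => mul_nonneg (hμ.1 ω).le ((hσ ω).1 m₀)
  obtain ⟨ω₀, hω₀⟩ := hon
  have hxne : x ≠ 0 := by
    intro h0
    have h1 : x ω₀ = 0 := congrFun h0 ω₀
    have h2 : 0 < x ω₀ := mul_pos (hμ.1 ω₀) hω₀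
    linarith
  have hropt : ∀ m a, 0 < ρ m a → ∀ b,
      (∑ ω, μ₀ ω * σ ω m * uR (b, ω)) ≤ ∑ ω, μ₀ ω * σ ω m * uR (a, ω) :=
    fun m a ha b => rbr_opt μ₀ uR σ ρ hρ hRBR m a ha b
  -- two actions in the support of ρ m₀
  obtain ⟨a_i, hai⟩ : ∃ a, 0 < ρ m₀ a := by
    by_contra hc
    push_neg at hc
    have : ∑ a, ρ m₀ a = 0 :=
      Finset.sum_eq_zero fun a _ => le_antisymm (hc a) ((hρ m₀).1 a)
    rw [(hρ m₀).2] at this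
    exact one_ne_zero this
  have hne1 : ρ m₀ a_i ≠ 1 := fun h => hnot ⟨a_i, h⟩
  obtain ⟨a_j, hij, haj⟩ : ∃ b, b ≠ a_i ∧ 0 < ρ m₀ b := by
    by_contra hc
    push_neg at hc
    have h0 : ∀ b ∈ Finset.univ, b ≠ a_i → ρ m₀ b = 0 :=
      fun b _ hb => le_antisymm (hc b hb) ((hρ m₀).1 b)
    have : ∑ a, ρ m₀ a = ρ m₀ a_i := Finset.sum_eq_single a_i h0 (by simp)
    rw [(hρ m₀).2] at this
    exact hne1 this.symm
  -- sender indifference on the support of ρ m₀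
  have hsind : ∀ a b, 0 < ρ m₀ a → 0 < ρ m₀ b →
      (∑ ω, μ₀ ω * σ ω m₀ * uS (a, ω)) = ∑ ω, μ₀ ω * σ ω m₀ * uS (b, ω) := by
    set t : A → ℝ := fun c => ∑ ω, μ₀ ω * σ ω m₀ * uS (c, ω) with htdef
    obtain ⟨bs, hbs_mem, hbs⟩ := Finset.exists_max_image
      (Finset.univ.filter fun c => 0 < ρ m₀ c) t ⟨a_i, by simp [hai]⟩
    have hbs_pos : 0 < ρ m₀ bs := (Finset.mem_filter.mp hbs_mem).2
    have hone : ∀ a, 0 < ρ m₀ a → t a = t bs := by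
      intro a ha
      by_contra hne
      have hlt : t a < t bs := lt_of_le_of_ne (hbs a (by simp [ha])) hne
      set ρ'' : M → A → ℝ := Function.update ρ m₀ (fun c => if c = bs then 1 else 0)
        with hρ''def
      have hact'' : IsAct ρ'' := by
        intro m'
        by_cases hm : m' = m₀
        · subst hm
          rw [hρ''def]
          constructor
          · intro a'
            rw [Function.update_self]
            positivity
          · rw [Function.update_self]
            simp
        · rw [hρ''def, Function.update_of_ne hm]
          exact hρ m'
      have hrbr'' : RBR μ₀ uR σ ρ'' := by
        refine rbr_of_opt μ₀ uR σ ρ'' hact'' fun m' a' ha' b => ?_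
        by_cases hm : m' = m₀
        · rw [hρ''def, hm, Function.update_self] at ha'
          have haeq : a' = bs := by
            by_contra hcc
            simp [hcc] at ha'
          rw [hm, haeq]
          exact hropt m₀ bs hbs_pos b
        · rw [hρ''def, Function.update_of_ne hm] at ha'
          exact hropt m' a' ha' b
      have hU : U μ₀ uS σ ρ'' = U μ₀ uS σ ρ - (∑ c, ρ m₀ c * t c)
          + ∑ c, (if c = bs then (1:ℝ) else 0) * t c := by
        rw [hρ''def]
        exact U_update μ₀ uS σ ρ m₀ _
      have hpure : ∑ c, (if c = bs then (1:ℝ) else 0) * t c = t bs := by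
        simp [ite_mul]
      have hlt2 : ∑ c, ρ m₀ c * t c < t bs := by
        have h1 : ∀ c ∈ Finset.univ, ρ m₀ c * t c ≤ ρ m₀ c * t bs := by
          intro c _
          rcases eq_or_lt_of_le ((hρ m₀).1 c) with h0 | h0
          · rw [← h0]; simp
          · exact mul_le_mul_of_nonneg_left (hbs c (by simp [h0])) ((hρ m₀).1 c)
        have h2 : ∑ c, ρ m₀ c * t c < ∑ c, ρ m₀ c * t bs :=
          Finset.sum_lt_sum h1 ⟨a, Finset.mem_univ a, mul_lt_mul_of_pos_left hlt ha⟩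
        calc ∑ c, ρ m₀ c * t c < ∑ c, ρ m₀ c * t bs := h2
          _ = t bs := by rw [← Finset.sum_mul, (hρ m₀).2, one_mul]
      have hgt : U μ₀ uS σ ρ < U μ₀ uS σ ρ'' := by
        rw [hU, hpure]
        linarith
      exact absurd (hkey σ ρ'' hσ hact'' hrbr'') (not_le.mpr hgt)
    intro a b ha hb
    show t a = t b
    rw [hone a ha, hone b hb]
  have hgji : (∑ ω, μ₀ ω * σ ω m₀ * uR (a_j, ω)) = ∑ ω, μ₀ ω * σ ω m₀ * uR (a_i, ω) :=
    le_antisymm (hropt m₀ a_i hai a_j) (hropt m₀ a_j haj a_i)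
  have htji : (∑ ω, μ₀ ω * σ ω m₀ * uS (a_j, ω)) = ∑ ω, μ₀ ω * σ ω m₀ * uS (a_i, ω) :=
    hsind a_j a_i haj hai
  -- the expanded-indifference rows that x annihilates
  set T := TMat uS uR a_i with hT
  set s : Finset ((({j : A // j ≠ a_i} ⊕ {j : A // j ≠ a_i}) ⊕ Ω)) :=
    Finset.univ.filter (fun rr => match rr with
      | Sum.inl (Sum.inl _) => False
      | Sum.inl (Sum.inr b) =>
          (∑ ω, μ₀ ω * σ ω m₀ * uR (b.1, ω)) = ∑ ω, μ₀ ω * σ ω m₀ * uR (a_i, ω)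
      | Sum.inr ω => x ω = 0) with hs
  have hrow1 : ∀ (b : {j : A // j ≠ a_i}) (ω : Ω),
      T (Sum.inl (Sum.inr b)) ω = uR (b.1, ω) - uR (a_i, ω) := fun b ω => rfl
  have hrow2 : ∀ (b : {j : A // j ≠ a_i}) (ω : Ω),
      T (Sum.inl (Sum.inl b)) ω = uS (b.1, ω) - uS (a_i, ω) := fun b ω => rfl
  have hrow3 : ∀ (ω' ω : Ω),
      T (Sum.inr ω') ω = if ω' = ω then 1 else 0 := fun ω' ω => rfl
  have hxuR : ∀ c : A, (∑ ω, x ω * uR (c, ω)) = ∑ ω, μ₀ ω * σ ω m₀ * uR (c, ω) := by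
    intro c
    exact Finset.sum_congr rfl fun ω _ => by rw [hxdef]
  have hxker : ∀ i ∈ s, ∑ ω, T i ω * x ω = 0 := by
    intro i hi
    rw [hs, Finset.mem_filter] at hi
    obtain ⟨-, hP⟩ := hi
    match i, hP with
    | Sum.inl (Sum.inl b), hP => exact absurd hP not_false
    | Sum.inl (Sum.inr b), hP =>
      have h1 : ∑ ω, T (Sum.inl (Sum.inr b)) ω * x ω
          = ∑ ω, x ω * (uR (b.1, ω) - uR (a_i, ω)) := by
        refine Finset.sum_congr rfl fun ω _ => ?_
        rw [hrow1]
        ring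
      rw [h1, sum_mul_sub, hxuR, hxuR, hP, sub_self]
    | Sum.inr ω', hP =>
      have h1 : ∑ ω, T (Sum.inr ω') ω * x ω = x ω' := by
        have : ∀ ω, T (Sum.inr ω') ω * x ω = if ω' = ω then x ω else 0 := by
          intro ω
          rw [hrow3]
          split <;> simp
        rw [Finset.sum_congr rfl fun ω _ => this ω]
        simp
      rw [h1, hP]
  have hrns : Sum.inl (Sum.inl ⟨a_j, hij⟩) ∉ s := by
    rw [hs, Finset.mem_filter]
    rintro ⟨-, h⟩
    exact h
  obtain ⟨δ₀, hδ₀s, hδ₀r⟩ := exists_delta T s (Sum.inl (Sum.inl ⟨a_j, hij⟩)) hrns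
    (hscant a_i s) (hscant a_i _) x hxne hxker
  -- normalize the sign of δ
  obtain ⟨δ, hδtie, hδsupp, hδpos⟩ : ∃ δ : Ω → ℝ,
      (∀ b : A, ((∑ ω, μ₀ ω * σ ω m₀ * uR (b, ω)) = ∑ ω, μ₀ ω * σ ω m₀ * uR (a_i, ω)) →
        (∑ ω, δ ω * (uR (a_i, ω) - uR (b, ω))) = 0) ∧
      (∀ ω, x ω = 0 → δ ω = 0) ∧
      0 < ∑ ω, δ ω * (uS (a_i, ω) - uS (a_j, ω)) := by
    have htie0 : ∀ b : A,
        ((∑ ω, μ₀ ω * σ ω m₀ * uR (b, ω)) = ∑ ω, μ₀ ω * σ ω m₀ * uR (a_i, ω)) →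
        (∑ ω, δ₀ ω * (uR (a_i, ω) - uR (b, ω))) = 0 := by
      intro b hb
      by_cases hbi : b = a_i
      · subst hbi; simp
      · have hmem : Sum.inl (Sum.inr ⟨b, hbi⟩) ∈ s := by
          rw [hs, Finset.mem_filter]
          exact ⟨Finset.mem_univ _, hb⟩
        have h1 := hδ₀s _ hmem
        have h2 : ∑ ω, T (Sum.inl (Sum.inr (⟨b, hbi⟩ : {j : A // j ≠ a_i}))) ω * δ₀ ω
            = - ∑ ω, δ₀ ω * (uR (a_i, ω) - uR (b, ω)) := by
          rw [← Finset.sum_neg_distrib]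
          refine Finset.sum_congr rfl fun ω _ => ?_
          rw [hrow1]
          ring
        rw [h2] at h1
        linarith
    have hsupp0 : ∀ ω, x ω = 0 → δ₀ ω = 0 := by
      intro ω hω
      have hmem : (Sum.inr ω : (({j : A // j ≠ a_i} ⊕ {j : A // j ≠ a_i}) ⊕ Ω)) ∈ s := by
        rw [hs, Finset.mem_filter]
        exact ⟨Finset.mem_univ _, hω⟩
      have h1 := hδ₀s _ hmem
      have h2 : ∑ ω', T (Sum.inr ω) ω' * δ₀ ω' = δ₀ ω := by
        have : ∀ ω', T (Sum.inr ω) ω' * δ₀ ω' = if ω = ω' then δ₀ ω' else 0 := by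
          intro ω'
          rw [hrow3]
          split <;> simp
        rw [Finset.sum_congr rfl fun ω' _ => this ω']
        simp
      rw [h2] at h1
      exact h1
    have hD : (∑ ω, δ₀ ω * (uS (a_i, ω) - uS (a_j, ω))) ≠ 0 := by
      intro h0
      apply hδ₀r
      have h2 : ∑ ω, T (Sum.inl (Sum.inl (⟨a_j, hij⟩ : {j : A // j ≠ a_i}))) ω * δ₀ ω
          = - ∑ ω, δ₀ ω * (uS (a_i, ω) - uS (a_j, ω)) := by
        rw [← Finset.sum_neg_distrib]
        refine Finset.sum_congr rfl fun ω _ => ?_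
        rw [hrow2]
        ring
      rw [h2, h0, neg_zero]
    rcases hD.lt_or_gt with hlt | hlt
    · refine ⟨fun ω => -δ₀ ω, fun b hb => ?_, fun ω hω => by simp [hsupp0 ω hω], ?_⟩
      · have := htie0 b hb
        have h2 : ∑ ω, (-δ₀ ω) * (uR (a_i, ω) - uR (b, ω))
            = - ∑ ω, δ₀ ω * (uR (a_i, ω) - uR (b, ω)) := by
          rw [← Finset.sum_neg_distrib]
          exact Finset.sum_congr rfl fun ω _ => by ring
        rw [h2, this, neg_zero]
      · have h2 : ∑ ω, (-δ₀ ω) * (uS (a_i, ω) - uS (a_j, ω))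
            = - ∑ ω, δ₀ ω * (uS (a_i, ω) - uS (a_j, ω)) := by
          rw [← Finset.sum_neg_distrib]
          exact Finset.sum_congr rfl fun ω _ => by ring
        rw [h2]
        linarith
    · exact ⟨δ₀, htie0, hsupp0, hlt⟩
  -- building blocks of the improved profile
  set z : Ω → ℝ := fun ω => x ω * ρ m₀ a_i with hz
  set y : A → Ω → ℝ := fun a ω => ∑ m, μ₀ ω * σ ω m * ρ m a with hy
  have hynn : ∀ a ω, 0 ≤ y a ω := by
    intro a ω
    simp only [hy]
    exact Finset.sum_nonneg fun m _ =>
      mul_nonneg (mul_nonneg (hμ.1 ω).le ((hσ ω).1 m)) ((hρ m).1 a)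
  have hyz : ∀ ω, z ω ≤ y a_i ω := by
    intro ω
    simp only [hy, hz, hxdef]
    exact Finset.single_le_sum (f := fun m => μ₀ ω * σ ω m * ρ m a_i)
      (fun m _ => mul_nonneg (mul_nonneg (hμ.1 ω).le ((hσ ω).1 m)) ((hρ m).1 a_i))
      (Finset.mem_univ m₀)
  have hysum : ∀ ω, ∑ a, y a ω = μ₀ ω := by
    intro ω
    simp only [hy]
    rw [Finset.sum_comm]
    have h1 : ∀ m, ∑ a, μ₀ ω * σ ω m * ρ m a = μ₀ ω * σ ω m := fun m => by
      rw [← Finset.mul_sum, (hρ m).2, mul_one]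
    rw [Finset.sum_congr rfl fun m _ => h1 m, ← Finset.mul_sum, (hσ ω).2, mul_one]
  have hyU : ∑ a, ∑ ω, y a ω * uS (a, ω) = U μ₀ uS σ ρ := by
    rw [show U μ₀ uS σ ρ = ∑ ω, ∑ m, ∑ a, μ₀ ω * σ ω m * ρ m a * uS (a, ω) from rfl]
    have h1 : ∀ a, ∑ ω, y a ω * uS (a, ω) = ∑ ω, ∑ m, μ₀ ω * σ ω m * ρ m a * uS (a, ω) := by
      intro a
      refine Finset.sum_congr rfl fun ω _ => ?_
      simp only [hy]
      rw [Finset.sum_mul]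
    rw [Finset.sum_congr rfl fun a _ => h1 a, Finset.sum_comm]
    exact Finset.sum_congr rfl fun ω _ => Finset.sum_comm
  have hyrec : ∀ (a b : A) (E : Finset M), (∀ m ∈ E, 0 < ρ m a →
      (∑ ω, μ₀ ω * σ ω m * uR (b, ω)) ≤ ∑ ω, μ₀ ω * σ ω m * uR (a, ω)) →
      0 ≤ ∑ ω, (∑ m ∈ E, μ₀ ω * σ ω m * ρ m a) * (uR (a, ω) - uR (b, ω)) := by
    intro a b E hE
    have h1 : ∑ ω, (∑ m ∈ E, μ₀ ω * σ ω m * ρ m a) * (uR (a, ω) - uR (b, ω))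
        = ∑ m ∈ E, ρ m a * ((∑ ω, μ₀ ω * σ ω m * uR (a, ω))
            - ∑ ω, μ₀ ω * σ ω m * uR (b, ω)) := by
      have e1 : ∀ ω : Ω, (∑ m ∈ E, μ₀ ω * σ ω m * ρ m a) * (uR (a, ω) - uR (b, ω))
          = ∑ m ∈ E, μ₀ ω * σ ω m * ρ m a * (uR (a, ω) - uR (b, ω)) := fun ω =>
        Finset.sum_mul _ _ _
      rw [Finset.sum_congr rfl fun ω _ => e1 ω, Finset.sum_comm]
      refine Finset.sum_congr rfl fun m _ => ?_
      rw [← sum_mul_sub (fun ω => μ₀ ω * σ ω m) (fun ω => uR (a, ω)) (fun ω => uR (b, ω)),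
        Finset.mul_sum]
      exact Finset.sum_congr rfl fun ω _ => by ring
    rw [h1]
    refine Finset.sum_nonneg fun m hm => ?_
    rcases eq_or_lt_of_le ((hρ m).1 a) with h0 | h0
    · rw [← h0, zero_mul]
    · exact mul_nonneg h0.le (by linarith [hE m hm h0])
  have hyopt : ∀ a b, 0 ≤ ∑ ω, y a ω * (uR (a, ω) - uR (b, ω)) := by
    intro a b
    have h2 := hyrec a b Finset.univ (fun m _ h0 => hropt m a h0 b)
    simp only [hy]
    exact h2
  have hyopt' : ∀ b, 0 ≤ ∑ ω, (y a_i ω - z ω) * (uR (a_i, ω) - uR (b, ω)) := by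
    intro b
    have h2 := hyrec a_i b (Finset.univ.erase m₀) (fun m _ h0 => hropt m a_i h0 b)
    have h3 : ∀ ω, y a_i ω - z ω = ∑ m ∈ Finset.univ.erase m₀, μ₀ ω * σ ω m * ρ m a_i := by
      intro ω
      have h4 := Finset.add_sum_erase Finset.univ (fun m => μ₀ ω * σ ω m * ρ m a_i)
        (Finset.mem_univ m₀)
      beta_reduce at h4
      simp only [hy, hz, hxdef]
      linarith [h4]
    rw [Finset.sum_congr rfl fun ω _ => by rw [h3 ω]]
    exact h2
  have hzR : ∀ (c b : A), (∑ ω, z ω * (uR (c, ω) - uR (b, ω)))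
      = ((∑ ω, μ₀ ω * σ ω m₀ * uR (c, ω)) - ∑ ω, μ₀ ω * σ ω m₀ * uR (b, ω)) * ρ m₀ a_i := by
    intro c b
    rw [← sum_mul_sub (fun ω => μ₀ ω * σ ω m₀) (fun ω => uR (c, ω)) (fun ω => uR (b, ω)),
      Finset.sum_mul]
    refine Finset.sum_congr rfl fun ω _ => ?_
    simp only [hz, hxdef]
    ring
  have hzS : (∑ ω, z ω * (uS (a_j, ω) - uS (a_i, ω))) = 0 := by
    have h1 : (∑ ω, z ω * (uS (a_j, ω) - uS (a_i, ω)))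
        = ((∑ ω, μ₀ ω * σ ω m₀ * uS (a_j, ω)) - ∑ ω, μ₀ ω * σ ω m₀ * uS (a_i, ω))
            * ρ m₀ a_i := by
      rw [← sum_mul_sub (fun ω => μ₀ ω * σ ω m₀) (fun ω => uS (a_j, ω)) (fun ω => uS (a_i, ω)),
        Finset.sum_mul]
      refine Finset.sum_congr rfl fun ω _ => ?_
      simp only [hz, hxdef]
      ring
    rw [h1, htji, sub_self, zero_mul]
  have hδ_aj : ∀ b : A, (∑ ω, δ ω * (uR (a_j, ω) - uR (b, ω)))
      = ∑ ω, δ ω * (uR (a_i, ω) - uR (b, ω)) := by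
    intro b
    have h1 : ∀ ω : Ω, δ ω * (uR (a_j, ω) - uR (b, ω))
        = δ ω * (uR (a_i, ω) - uR (b, ω)) - δ ω * (uR (a_i, ω) - uR (a_j, ω)) := fun ω => by
      ring
    rw [Finset.sum_congr rfl fun ω _ => h1 ω, Finset.sum_sub_distrib, hδtie a_j hgji, sub_zero]
  -- choice of ε
  have hxpos : ∀ ω, x ω ≠ 0 → 0 < x ω := fun ω h => lt_of_le_of_ne (hxnn ω) (Ne.symm h)
  obtain ⟨ε₁, hε₁pos, hε₁⟩ := exists_eps (fun ω => if x ω = 0 then 1 else z ω)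
    (fun ω => if x ω = 0 then 0 else |δ ω|) (by
      intro ω
      by_cases h : x ω = 0
      · simp [h]
      · simp only [if_neg h, hz]
        exact mul_pos (hxpos ω h) hai)
  obtain ⟨ε₂, hε₂pos, hε₂⟩ := exists_eps
    (fun b => if (∑ ω, μ₀ ω * σ ω m₀ * uR (b, ω)) = (∑ ω, μ₀ ω * σ ω m₀ * uR (a_i, ω)) then 1
      else ((∑ ω, μ₀ ω * σ ω m₀ * uR (a_i, ω)) - ∑ ω, μ₀ ω * σ ω m₀ * uR (b, ω)) * ρ m₀ a_i)
    (fun b => if (∑ ω, μ₀ ω * σ ω m₀ * uR (b, ω)) = (∑ ω, μ₀ ω * σ ω m₀ * uR (a_i, ω)) then 0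
      else |∑ ω, δ ω * (uR (a_i, ω) - uR (b, ω))|) (by
      intro b
      by_cases h : (∑ ω, μ₀ ω * σ ω m₀ * uR (b, ω)) = ∑ ω, μ₀ ω * σ ω m₀ * uR (a_i, ω)
      · simp [h]
      · simp only [if_neg h]
        have h2 : (∑ ω, μ₀ ω * σ ω m₀ * uR (b, ω)) < ∑ ω, μ₀ ω * σ ω m₀ * uR (a_i, ω) :=
          lt_of_le_of_ne (hropt m₀ a_i hai b) h
        exact mul_pos (by linarith) hai)
  set ε : ℝ := min ε₁ ε₂ with hεdef
  have hεpos : 0 < ε := lt_min hε₁pos hε₂pos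
  have E1 : ∀ ω, |ε * δ ω| ≤ z ω := by
    intro ω
    rw [abs_mul, abs_of_pos hεpos]
    by_cases h : x ω = 0
    · simp [hδsupp ω h, hz, h]
    · have h2 := hε₁ ω
      rw [if_neg h, if_neg h] at h2
      calc ε * |δ ω| ≤ ε₁ * |δ ω| :=
            mul_le_mul_of_nonneg_right (min_le_left _ _) (abs_nonneg _)
        _ ≤ z ω := h2
  have hkb : ∀ b : A,
      0 ≤ ((∑ ω, μ₀ ω * σ ω m₀ * uR (a_i, ω)) - ∑ ω, μ₀ ω * σ ω m₀ * uR (b, ω)) * ρ m₀ a_i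
        - ε * (∑ ω, δ ω * (uR (a_i, ω) - uR (b, ω)))
      ∧ 0 ≤ ((∑ ω, μ₀ ω * σ ω m₀ * uR (a_i, ω)) - ∑ ω, μ₀ ω * σ ω m₀ * uR (b, ω)) * ρ m₀ a_i
        + ε * (∑ ω, δ ω * (uR (a_i, ω) - uR (b, ω))) := by
    intro b
    by_cases htie : (∑ ω, μ₀ ω * σ ω m₀ * uR (b, ω)) = ∑ ω, μ₀ ω * σ ω m₀ * uR (a_i, ω)
    · rw [hδtie b htie, htie, sub_self, zero_mul, mul_zero]
      norm_num
    · have h2 := hε₂ b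
      rw [if_neg htie, if_neg htie] at h2
      have h3 : ε * |∑ ω, δ ω * (uR (a_i, ω) - uR (b, ω))|
          ≤ ((∑ ω, μ₀ ω * σ ω m₀ * uR (a_i, ω)) - ∑ ω, μ₀ ω * σ ω m₀ * uR (b, ω))
              * ρ m₀ a_i :=
        le_trans (mul_le_mul_of_nonneg_right (min_le_right _ _) (abs_nonneg _)) h2
      have h4 : ε * (∑ ω, δ ω * (uR (a_i, ω) - uR (b, ω)))
          ≤ ε * |∑ ω, δ ω * (uR (a_i, ω) - uR (b, ω))| :=
        mul_le_mul_of_nonneg_left (le_abs_self _) hεpos.le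
      have h5 : ε * (-(∑ ω, δ ω * (uR (a_i, ω) - uR (b, ω))))
          ≤ ε * |∑ ω, δ ω * (uR (a_i, ω) - uR (b, ω))| :=
        mul_le_mul_of_nonneg_left (neg_le_abs _) hεpos.le
      constructor <;> nlinarith [h3, h4, h5]
  -- the fresh message and the embedding of actions into messages
  have hAM : Fintype.card A < Fintype.card M := lt_of_le_of_lt (le_max_right _ _) hM
  obtain ⟨f⟩ : Nonempty (A ↪ M) := Function.Embedding.nonempty_of_card_le hAM.le
  obtain ⟨ms, hms⟩ : ∃ m : M, ∀ a, f a ≠ m := by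
    by_contra hc
    push_neg at hc
    have hsurj : Function.Surjective f := fun m => hc m
    exact absurd (Fintype.card_le_of_surjective f hsurj) (not_le.mpr hAM)
  have hnotms : ¬ ∃ a, (f : A → M) a = ms := fun ⟨a, ha⟩ => hms a ha
  -- the improved profile
  set w : Ω → ℝ := fun ω => (z ω - ε * δ ω) / 2 with hw
  set Yb : A → Ω → ℝ := fun a ω =>
    if a = a_i then y a_i ω - z ω + (z ω + ε * δ ω) / 2 else y a ω with hYb
  set X : M → Ω → ℝ := fun m ω =>
    (if m = ms then w ω else 0) + Function.extend f (fun a => Yb a ω) (fun _ => 0) m with hX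
  set act : M → A := fun m => if m = ms then a_j else Function.extend f id (fun _ => a_i) m
    with hactdef
  set σ1 : Ω → M → ℝ := fun ω m => X m ω / μ₀ ω with hσ1
  set ρ1 : M → A → ℝ := fun m a => if a = act m then 1 else 0 with hρ1
  have hXms : ∀ ω, X ms ω = w ω := by
    intro ω
    simp only [hX, if_pos rfl]
    rw [Function.extend_apply' _ _ _ hnotms]
    simp
  have hXf : ∀ a ω, X (f a) ω = Yb a ω := by
    intro a ω
    simp only [hX]
    rw [if_neg (hms a), f.injective.extend_apply, zero_add]
  have hX0 : ∀ m, m ≠ ms → (¬∃ a, (f : A → M) a = m) → ∀ ω, X m ω = 0 := by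
    intro m hm he ω
    simp only [hX]
    rw [if_neg hm, Function.extend_apply' _ _ _ he]
    simp
  have hactms : act ms = a_j := by simp [hactdef]
  have hactf : ∀ a, act (f a) = a := by
    intro a
    simp only [hactdef]
    rw [if_neg (hms a), f.injective.extend_apply]
    rfl
  have hwnn : ∀ ω, 0 ≤ w ω := by
    intro ω
    have h1 := (abs_le.mp (E1 ω)).2
    simp only [hw]
    linarith
  have hYbnn : ∀ a ω, 0 ≤ Yb a ω := by
    intro a ω
    by_cases ha : a = a_i
    · rw [ha]
      simp only [hYb]
      rw [if_pos trivial]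
      have h1 := (abs_le.mp (E1 ω)).1
      have h2 := hyz ω
      linarith
    · simp only [hYb, if_neg ha]
      exact hynn a ω
  have hXnn : ∀ m ω, 0 ≤ X m ω := by
    intro m ω
    by_cases hm : m = ms
    · subst hm
      rw [hXms ω]
      exact hwnn ω
    · by_cases he : ∃ a, (f : A → M) a = m
      · obtain ⟨a, rfl⟩ := he
        rw [hXf a ω]
        exact hYbnn a ω
      · rw [hX0 m hm he ω]
  have hXsum : ∀ ω, ∑ m, X m ω = μ₀ ω := by
    intro ω
    simp only [hX]
    rw [Finset.sum_add_distrib]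
    have h1 : ∑ m, (if m = ms then w ω else 0) = w ω := by simp
    have h2 : ∑ m, Function.extend f (fun a => Yb a ω) (fun _ => 0) m = ∑ a, Yb a ω :=
      sum_extend f f.injective _
    rw [h1, h2]
    have h3 : ∀ a, Yb a ω = y a ω + (if a = a_i then (ε * δ ω - z ω) / 2 else 0) := by
      intro a
      simp only [hYb]
      split_ifs with ha
      · rw [ha]; ring
      · rw [add_zero]
    rw [Finset.sum_congr rfl fun a _ => h3 a, Finset.sum_add_distrib, hysum ω]
    have h4 : ∑ a, (if a = a_i then (ε * δ ω - z ω) / 2 else 0) = (ε * δ ω - z ω) / 2 := by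
      simp
    rw [h4]
    simp only [hw]
    ring
  have hmsg1 : IsMsg σ1 := by
    intro ω
    constructor
    · intro m
      simp only [hσ1]
      exact div_nonneg (hXnn m ω) (hμ.1 ω).le
    · simp only [hσ1]
      rw [← Finset.sum_div, hXsum ω, div_self (hμ.1 ω).ne']
  have hact1 : IsAct ρ1 := by
    intro m
    constructor
    · intro a
      by_cases h : a = act m <;> simp [hρ1, h]
    · simp [hρ1]
  have hG : ∀ (u : A × Ω → ℝ) (m : M) (b : A),
      (∑ ω, μ₀ ω * σ1 ω m * u (b, ω)) = ∑ ω, X m ω * u (b, ω) := by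
    intro u m b
    refine Finset.sum_congr rfl fun ω _ => ?_
    simp only [hσ1]
    rw [mul_comm (μ₀ ω) (X m ω / μ₀ ω), div_mul_cancel₀ _ (hμ.1 ω).ne']
  have hcomb3 : ∀ (u v r d : Ω → ℝ) (c₁ c₂ c₃ : ℝ),
      ∑ ω, (c₁ * u ω + c₂ * v ω + c₃ * r ω) * d ω
        = c₁ * (∑ ω, u ω * d ω) + c₂ * (∑ ω, v ω * d ω) + c₃ * ∑ ω, r ω * d ω := by
    intro u v r d c₁ c₂ c₃
    rw [Finset.mul_sum, Finset.mul_sum, Finset.mul_sum, ← Finset.sum_add_distrib,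
      ← Finset.sum_add_distrib]
    exact Finset.sum_congr rfl fun ω _ => by ring
  have hover : ∀ m b, (∑ ω, X m ω * uR (b, ω)) ≤ ∑ ω, X m ω * uR (act m, ω) := by
    intro m b
    have hdiff : 0 ≤ ∑ ω, X m ω * (uR (act m, ω) - uR (b, ω)) := by
      by_cases hm : m = ms
      · rw [hm, hactms]
        have e1 : ∑ ω, X ms ω * (uR (a_j, ω) - uR (b, ω))
            = (1/2) * (∑ ω, z ω * (uR (a_j, ω) - uR (b, ω)))
              + (-ε/2) * (∑ ω, δ ω * (uR (a_j, ω) - uR (b, ω)))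
              + 0 * ∑ ω, z ω * (uR (a_j, ω) - uR (b, ω)) := by
          rw [← hcomb3 z δ z (fun ω => uR (a_j, ω) - uR (b, ω)) (1/2) (-ε/2) 0]
          refine Finset.sum_congr rfl fun ω _ => ?_
          rw [hXms ω]
          simp only [hw]
          ring
        rw [e1, hzR a_j b, hδ_aj b, hgji]
        have := (hkb b).1
        linarith
      · by_cases he : ∃ a, (f : A → M) a = m
        · obtain ⟨a, rfl⟩ := he
          rw [hactf a]
          by_cases ha : a = a_i
          · rw [ha]
            have e1 : ∑ ω, X (f a_i) ω * (uR (a_i, ω) - uR (b, ω))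
                = 1 * (∑ ω, (y a_i ω - z ω) * (uR (a_i, ω) - uR (b, ω)))
                  + (1/2) * (∑ ω, z ω * (uR (a_i, ω) - uR (b, ω)))
                  + (ε/2) * ∑ ω, δ ω * (uR (a_i, ω) - uR (b, ω)) := by
              rw [← hcomb3 (fun ω => y a_i ω - z ω) z δ
                (fun ω => uR (a_i, ω) - uR (b, ω)) 1 (1/2) (ε/2)]
              refine Finset.sum_congr rfl fun ω _ => ?_
              rw [hXf a_i ω]
              simp only [hYb]
              rw [if_pos trivial]
              ring
            rw [e1, hzR a_i b]
            have h6 := (hkb b).2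
            have h7 := hyopt' b
            linarith
          · have e1 : ∑ ω, X (f a) ω * (uR (a, ω) - uR (b, ω))
                = ∑ ω, y a ω * (uR (a, ω) - uR (b, ω)) := by
              refine Finset.sum_congr rfl fun ω _ => ?_
              rw [hXf a ω]
              simp only [hYb, if_neg ha]
            rw [e1]
            exact hyopt a b
        · have h0 : ∀ ω : Ω, X m ω * (uR (act m, ω) - uR (b, ω)) = 0 := fun ω => by
            rw [hX0 m hm he ω, zero_mul]
          rw [Finset.sum_congr rfl fun ω _ => h0 ω]
          simp
    rw [sum_mul_sub] at hdiff
    linarith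
  have hrbr1 : RBR μ₀ uR σ1 ρ1 := by
    refine rbr_of_opt μ₀ uR σ1 ρ1 hact1 fun m a ha b => ?_
    have haeq : a = act m := by
      by_contra hc
      simp [hρ1, hc] at ha
    subst haeq
    rw [hG uR m b, hG uR m (act m)]
    exact hover m b
  -- payoff of the improved profile
  have hpick : ∀ (V : A → ℝ) (c : A), ∑ a, (if a = c then (1:ℝ) else 0) * V a = V c := by
    intro V c
    simp [ite_mul]
  have hpay : U μ₀ uS σ1 ρ1 = ∑ m, ∑ ω, X m ω * uS (act m, ω) := by
    rw [U_rw]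
    refine Finset.sum_congr rfl fun m _ => ?_
    have h1 : ∑ a, ρ1 m a * ∑ ω, μ₀ ω * σ1 ω m * uS (a, ω)
        = ∑ a, (if a = act m then (1:ℝ) else 0) * ∑ ω, X m ω * uS (a, ω) := by
      refine Finset.sum_congr rfl fun a _ => ?_
      rw [hG uS m a]
    rw [h1, hpick]
  have hpay2 : ∑ m, ∑ ω, X m ω * uS (act m, ω)
      = (∑ ω, w ω * uS (a_j, ω)) + ∑ a, ∑ ω, Yb a ω * uS (a, ω) := by
    have h1 : ∀ m, ∑ ω, X m ω * uS (act m, ω)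
        = (if m = ms then ∑ ω, w ω * uS (a_j, ω) else 0)
          + Function.extend f (fun a => ∑ ω, Yb a ω * uS (a, ω)) (fun _ => 0) m := by
      intro m
      by_cases hm : m = ms
      · rw [hm, if_pos rfl, Function.extend_apply' _ _ _ hnotms, hactms]
        have : ∑ ω, X ms ω * uS (a_j, ω) = ∑ ω, w ω * uS (a_j, ω) :=
          Finset.sum_congr rfl fun ω _ => by rw [hXms ω]
        rw [this]
        simp
      · rw [if_neg hm]
        by_cases he : ∃ a, (f : A → M) a = m
        · obtain ⟨a, rfl⟩ := he
          rw [f.injective.extend_apply, hactf, zero_add]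
          exact Finset.sum_congr rfl fun ω _ => by rw [hXf a ω]
        · rw [Function.extend_apply' _ _ _ he]
          have : ∑ ω, X m ω * uS (act m, ω) = 0 :=
            Finset.sum_eq_zero fun ω _ => by rw [hX0 m hm he ω, zero_mul]
          rw [this]
          simp
    rw [Finset.sum_congr rfl fun m _ => h1 m, Finset.sum_add_distrib]
    congr 1
    · simp
    · exact sum_extend f f.injective _
  have hpay3 : ∑ a, ∑ ω, Yb a ω * uS (a, ω)
      = U μ₀ uS σ ρ + ∑ ω, (ε * δ ω - z ω) / 2 * uS (a_i, ω) := by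
    have h1 : ∀ a, ∑ ω, Yb a ω * uS (a, ω)
        = (∑ ω, y a ω * uS (a, ω))
          + (if a = a_i then ∑ ω, (ε * δ ω - z ω) / 2 * uS (a_i, ω) else 0) := by
      intro a
      by_cases ha : a = a_i
      · rw [ha, if_pos rfl, ← Finset.sum_add_distrib]
        refine Finset.sum_congr rfl fun ω _ => ?_
        simp only [hYb]
        rw [if_pos trivial]
        ring
      · rw [if_neg ha, add_zero]
        exact Finset.sum_congr rfl fun ω _ => by simp only [hYb]; rw [if_neg ha]
    rw [Finset.sum_congr rfl fun a _ => h1 a, Finset.sum_add_distrib, hyU]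
    congr 1
    simp
  have hfin : U μ₀ uS σ1 ρ1
      = U μ₀ uS σ ρ + (ε/2) * ∑ ω, δ ω * (uS (a_i, ω) - uS (a_j, ω)) := by
    rw [hpay, hpay2, hpay3]
    have h1 : (∑ ω, w ω * uS (a_j, ω)) + (∑ ω, (ε * δ ω - z ω) / 2 * uS (a_i, ω))
        = (ε/2) * (∑ ω, δ ω * (uS (a_i, ω) - uS (a_j, ω)))
          + (1/2) * ∑ ω, z ω * (uS (a_j, ω) - uS (a_i, ω)) := by
      rw [Finset.mul_sum, Finset.mul_sum, ← Finset.sum_add_distrib, ← Finset.sum_add_distrib]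
      refine Finset.sum_congr rfl fun ω _ => ?_
      simp only [hw]
      ring
    rw [hzS] at h1
    linarith [h1]
  have hgt : U μ₀ uS σ ρ < U μ₀ uS σ1 ρ1 := by
    rw [hfin]
    have h1 : 0 < (ε/2) * ∑ ω, δ ω * (uS (a_i, ω) - uS (a_j, ω)) :=
      mul_pos (by linarith) hδpos
    linarith
  exact absurd (hkey σ1 ρ1 hmsg1 hact1 hrbr1) (not_le.mpr hgt)

end KL
end

section
/- Fix nonempty finite sets Ω and A, a finite message set M with |M| > max{|Ω|, |A|}, and an interior prior μ₀ on Ω. Suppose the environment (u_S, u_R) satisfies scant-indifferences. If (σ, ρ) is a cheap-talk equilibrium such that U_S(σ, ρ) equals the persuasion payoff and ρ is pure-on-path, then there exist a partitional messaging strategy σ̂ and a pure action strategy ρ̂ such that at most |A| messages are sent with positive probability under σ̂, (σ̂, ρ̂) is a cheap-talk equilibrium, and U_S(σ̂, ρ̂) equals the persuasion payoff. -/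
/-!
Since Receiver answers every on-path message with a single action, Sender is indifferent among the
messages he sends in a state `ω`; scant indifferences makes `uS (·, ω)` injective, so all of them
induce the same action `α ω`. Let Sender instead announce `α ω` (through an injection `A ↪ M`) and
let Receiver follow the announcement. Payoffs do not change; Sender cannot gain because `α ω` is his
best induced action at `ω`, and Receiver still obeys because summing her obedience constraints over
all original messages that recommend `b` shows that `b` is optimal on the event `α = b`.
-/

open MeasureTheory

namespace KL

variable {Ω A M : Type} [Fintype Ω] [Fintype A] [Fintype M]

lemma le_of_maximizes_sum {ι β : Type*} [Fintype ι] [DecidableEq ι] {P : ι → β → Prop}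
    (F : ι → β → ℝ) {x : ι → β}
    (hmax : ∀ y : ι → β, (∀ i, P i (y i)) → ∑ i, F i (y i) ≤ ∑ i, F i (x i))
    (hx : ∀ i, P i (x i)) (i : ι) {v : β} (hv : P i v) : F i v ≤ F i (x i) := by
  have hy : ∀ j, P j (Function.update x i v j) := fun j => by
    rcases eq_or_ne j i with rfl | hj
    · simpa using hv
    · simpa [hj] using hx j
  have h := hmax _ hy
  simp only [Function.apply_update F x i v, Finset.sum_update_of_mem (Finset.mem_univ i)] at h
  rwa [Finset.sum_eq_add_sum_sdiff_singleton_of_mem (Finset.mem_univ i), add_le_add_iff_right] at h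

section Distributions

variable {X : Type} [Fintype X] {p : X → ℝ}

lemma IsDist.eq_zero_of_eq_one (hp : IsDist p) {x y : X} (hx : p x = 1) (hy : y ≠ x) :
    p y = 0 := by
  classical
  have h := Finset.add_sum_erase Finset.univ p (Finset.mem_univ x)
  rw [hp.2, hx, add_eq_left] at h
  exact (Finset.sum_eq_zero_iff_of_nonneg fun z _ => hp.1 z).mp h y (by simp [hy])

lemma IsDist.sum_mul_eq_of_eq_one (hp : IsDist p) {x : X} (hx : p x = 1) (f : X → ℝ) :
    ∑ y, p y * f y = f x := by
  rw [Finset.sum_eq_single x (fun y _ hy => by rw [hp.eq_zero_of_eq_one hx hy, zero_mul])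
    (by simp), hx, one_mul]

lemma IsDist.sum_mul_le (hp : IsDist p) {f : X → ℝ} {c : ℝ} (hf : ∀ x, f x ≤ c) :
    ∑ x, p x * f x ≤ c :=
  calc ∑ x, p x * f x ≤ ∑ x, p x * c := by gcongr with x; exacts [hp.1 x, hf x]
    _ = c := by rw [← Finset.sum_mul, hp.2, one_mul]

lemma IsDist.exists_pos (hp : IsDist p) : ∃ x, 0 < p x := by
  by_contra! h
  linarith [hp.2, Finset.sum_nonpos fun x (_ : x ∈ Finset.univ) => h x]

lemma IsDist.eq_sum_mul_of_pos (hp : IsDist p) {f : X → ℝ} (hf : ∀ y, f y ≤ ∑ z, p z * f z)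
    {x : X} (hx : 0 < p x) : f x = ∑ z, p z * f z := by
  refine (hf x).antisymm (not_lt.mp fun hlt => ?_)
  have h := Finset.sum_lt_sum (fun z (_ : z ∈ Finset.univ) =>
    mul_le_mul_of_nonneg_left (hf z) (hp.1 z)) ⟨x, Finset.mem_univ x, mul_lt_mul_of_pos_left hlt hx⟩
  rw [← Finset.sum_mul, hp.2, one_mul] at h
  exact lt_irrefl _ h

end Distributions

lemma Matrix.rank_lt_card_of_col_eq_zero {K ι n : Type*} [Field K] [Fintype ι] [Fintype n]
    [DecidableEq n] (N : Matrix ι n K) {j : n} (hj : ∀ i, N i j = 0) : N.rank < Fintype.card n := by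
  have hker : Pi.single j 1 ∈ LinearMap.ker N.mulVecLin := by
    ext i
    simp [Matrix.mulVec_single, hj]
  have hpos : 0 < Module.finrank K (LinearMap.ker N.mulVecLin) :=
    Submodule.one_le_finrank_iff.mpr ((Submodule.ne_bot_iff _).mpr ⟨_, hker, by simp⟩)
  have h := LinearMap.finrank_range_add_finrank_ker N.mulVecLin
  rw [Module.finrank_fintype_fun_eq_card] at h
  rw [Matrix.rank]
  omega

/-- If `a ≠ b` had `uS (a, ω₀) = uS (b, ω₀)`, the row `u_S(a,·) − u_S(b,·)` of `T^b` together with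
the identity rows of the other states would be `|Ω|` rows vanishing at `ω₀`. -/
lemma ScantIndiff.injective_uS {Ω A : Type} [Fintype Ω] {uS uR : A × Ω → ℝ}
    (hscant : ScantIndiff uS uR) (ω₀ : Ω) :
    Function.Injective fun a => uS (a, ω₀) := by
  classical
  intro a b h
  by_contra hab
  let r₀ : ({j : A // j ≠ b} ⊕ {j : A // j ≠ b}) ⊕ Ω := Sum.inl (Sum.inl ⟨a, hab⟩)
  let s : Finset (({j : A // j ≠ b} ⊕ {j : A // j ≠ b}) ⊕ Ω) :=
    insert r₀ ((Finset.univ.erase ω₀).image Sum.inr)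
  have hcard : s.card = Fintype.card Ω := by
    have : 0 < Fintype.card Ω := Fintype.card_pos_iff.mpr ⟨ω₀⟩
    rw [Finset.card_insert_of_notMem (by simp [r₀]),
      Finset.card_image_of_injective _ Sum.inr_injective,
      Finset.card_erase_of_mem (Finset.mem_univ _), Finset.card_univ]
    omega
  have hrank := hscant b s
  rw [hcard, min_self] at hrank
  refine (Matrix.rank_lt_card_of_col_eq_zero _ (j := ω₀) ?_).ne hrank
  rintro ⟨r, hr⟩
  rcases Finset.mem_insert.mp hr with rfl | hr
  · simpa [TMat, r₀, sub_eq_zero] using h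
  · obtain ⟨ω, hω, rfl⟩ := Finset.mem_image.mp hr
    simp [TMat, (Finset.mem_erase.mp hω).1]

section Game

variable {Ω A M : Type} [Fintype Ω] [Fintype A] [Fintype M] {μ₀ : Ω → ℝ}
  {σ : Ω → M → ℝ} {ρ : M → A → ℝ}

lemma U_eq_sum_state (u : A × Ω → ℝ) :
    U μ₀ u σ ρ = ∑ ω, μ₀ ω * ∑ m, σ ω m * ∑ a, ρ m a * u (a, ω) := by
  simp only [U, Finset.mul_sum, mul_assoc]

lemma U_eq_sum_message (u : A × Ω → ℝ) :
    U μ₀ u σ ρ = ∑ m, ∑ a, ρ m a * ∑ ω, μ₀ ω * σ ω m * u (a, ω) := by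
  simp only [U, Finset.mul_sum]
  rw [Finset.sum_comm]
  refine Finset.sum_congr rfl fun m _ => ?_
  rw [Finset.sum_comm]
  exact Finset.sum_congr rfl fun a _ => Finset.sum_congr rfl fun ω _ => by ring

lemma U_eq_of_forall_pos {α : Ω → A} (hσ : IsMsg σ) (hρ : IsAct ρ)
    (hα : ∀ ω m, 0 < σ ω m → ρ m (α ω) = 1) (u : A × Ω → ℝ) :
    U μ₀ u σ ρ = ∑ ω, μ₀ ω * u (α ω, ω) := by
  rw [U_eq_sum_state]
  refine Finset.sum_congr rfl fun ω _ => congrArg (μ₀ ω * ·) ?_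
  calc ∑ m, σ ω m * ∑ a, ρ m a * u (a, ω) = ∑ m, σ ω m * u (α ω, ω) := by
        refine Finset.sum_congr rfl fun m _ => ?_
        rcases ((hσ ω).1 m).eq_or_lt with h0 | hpos
        · rw [← h0, zero_mul, zero_mul]
        · rw [(hρ m).sum_mul_eq_of_eq_one (hα ω m hpos)]
    _ = u (α ω, ω) := by rw [← Finset.sum_mul, (hσ ω).2, one_mul]

lemma SBR.le_of_pos {uS : A × Ω → ℝ} (hμ : ∀ ω, 0 < μ₀ ω) (hσ : IsMsg σ)
    (hS : SBR μ₀ uS σ ρ) (ω : Ω) (m : M) {m' : M} (hm' : 0 < σ ω m') :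
    ∑ a, ρ m a * uS (a, ω) ≤ ∑ a, ρ m' a * uS (a, ω) := by
  classical
  have hdev : ∀ m, ∑ a, ρ m a * uS (a, ω) ≤ ∑ n, σ ω n * ∑ a, ρ n a * uS (a, ω) := fun m => by
    have h := le_of_maximizes_sum (fun ω p => μ₀ ω * ∑ n, p n * ∑ a, ρ n a * uS (a, ω))
      (fun σ' hσ' => by simpa only [U_eq_sum_state] using hS σ' hσ') hσ ω
      (v := fun n => if n = m then 1 else 0) ⟨fun n => by positivity, by simp⟩
    simpa [hμ ω] using h
  exact (hdev m).trans ((hσ ω).eq_sum_mul_of_pos hdev hm').ge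

lemma RBR.le_sum {uR : A × Ω → ℝ} (hρ : IsAct ρ) (hR : RBR μ₀ uR σ ρ) (m : M) (a : A) :
    ∑ ω, μ₀ ω * σ ω m * uR (a, ω) ≤ ∑ b, ρ m b * ∑ ω, μ₀ ω * σ ω m * uR (b, ω) := by
  classical
  have h := le_of_maximizes_sum (fun m q => ∑ b, q b * ∑ ω, μ₀ ω * σ ω m * uR (b, ω))
    (fun ρ' hρ' => by simpa only [U_eq_sum_message] using hR ρ' hρ') hρ m
    (v := fun b => if b = a then 1 else 0) ⟨fun b => by positivity, by simp⟩
  simpa using h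

lemma exists_action_of_pureOnPath {uS : A × Ω → ℝ} (hμ : ∀ ω, 0 < μ₀ ω)
    (hinj : ∀ ω, Function.Injective fun a => uS (a, ω)) (hσ : IsMsg σ) (hρ : IsAct ρ)
    (hS : SBR μ₀ uS σ ρ) (hpure : PureOnPath σ ρ) :
    ∃ α : Ω → A, (∀ ω m, 0 < σ ω m → ρ m (α ω) = 1) ∧ ∀ ω ω', uS (α ω', ω) ≤ uS (α ω, ω) := by
  choose m₀ hm₀ using fun ω => (hσ ω).exists_pos
  choose α hα using fun ω => hpure (m₀ ω) ⟨ω, hm₀ ω⟩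
  have hval : ∀ ω m {a}, ρ m a = 1 → ∑ b, ρ m b * uS (b, ω) = uS (a, ω) :=
    fun ω m _ ha => (hρ m).sum_mul_eq_of_eq_one ha _
  refine ⟨α, fun ω m hm => ?_, fun ω ω' => ?_⟩
  · obtain ⟨a, ha⟩ := hpure m ⟨ω, hm⟩
    have hle := hS.le_of_pos hμ hσ ω m (hm₀ ω)
    have hge := hS.le_of_pos hμ hσ ω (m₀ ω) hm
    rw [hval ω _ ha, hval ω _ (hα ω)] at hle hge
    rwa [← hinj ω (hle.antisymm hge)]
  · rw [← hval ω _ (hα ω'), ← hval ω _ (hα ω)]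
    exact hS.le_of_pos hμ hσ ω _ (hm₀ ω)

lemma RBR.pool [DecidableEq A] {uR : A × Ω → ℝ} {α : Ω → A} (hσ : IsMsg σ) (hρ : IsAct ρ)
    (hR : RBR μ₀ uR σ ρ) (hα : ∀ ω m, 0 < σ ω m → ρ m (α ω) = 1) (b a : A) :
    ∑ ω with α ω = b, μ₀ ω * uR (a, ω) ≤ ∑ ω with α ω = b, μ₀ ω * uR (b, ω) := by
  let S : Finset M := {m | ρ m b = 1}
  have hmass : ∀ ω, ∑ m ∈ S, σ ω m = if α ω = b then 1 else 0 := by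
    intro ω
    have hterm : ∀ m, (if ρ m b = 1 then σ ω m else 0) = if α ω = b then σ ω m else 0 := by
      intro m
      rcases ((hσ ω).1 m).eq_or_lt with h0 | hpos
      · simp [← h0]
      · by_cases hb : α ω = b
        · subst hb
          simp [hα ω m hpos]
        · have : ρ m b = 0 := (hρ m).eq_zero_of_eq_one (hα ω m hpos) (Ne.symm hb)
          simp [hb, this]
    rw [Finset.sum_filter, Finset.sum_congr rfl fun m _ => hterm m]
    split_ifs <;> simp [(hσ ω).2]
  have hpooled : ∀ c, ∑ m ∈ S, ∑ ω, μ₀ ω * σ ω m * uR (c, ω)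
      = ∑ ω with α ω = b, μ₀ ω * uR (c, ω) := by
    intro c
    rw [Finset.sum_comm, Finset.sum_filter]
    refine Finset.sum_congr rfl fun ω _ => ?_
    rw [← Finset.sum_mul, ← Finset.mul_sum, hmass]
    split_ifs <;> ring
  rw [← hpooled, ← hpooled]
  refine Finset.sum_le_sum fun m hm => (hR.le_sum hρ m a).trans_eq ?_
  exact (hρ m).sum_mul_eq_of_eq_one (Finset.mem_filter.mp hm).2 _

end Game

section PointMass

variable {X Y : Type} [DecidableEq Y]

def pointMass (f : X → Y) : X → Y → ℝ := fun x y => if f x = y then 1 else 0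

@[simp]
lemma pointMass_self (f : X → Y) (x : X) : pointMass f x (f x) = 1 := by simp [pointMass]

lemma isDist_pointMass [Fintype Y] (f : X → Y) (x : X) : IsDist (pointMass f x) :=
  ⟨fun y => by unfold pointMass; positivity, by simp [pointMass]⟩

@[simp]
lemma sum_pointMass_mul [Fintype Y] (f : X → Y) (x : X) (h : Y → ℝ) :
    ∑ y, pointMass f x y * h y = h (f x) :=
  (isDist_pointMass f x).sum_mul_eq_of_eq_one (pointMass_self f x) h

lemma setOf_onPath_pointMass {Z : Type} (f : Z → Y) :
    {y | OnPath (pointMass f) y} = Set.range f := by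
  ext y
  refine exists_congr fun z => ?_
  unfold pointMass
  split_ifs with h <;> simp [h]

end PointMass

section PureProfile

variable {Ω A M : Type} [Fintype Ω] [Fintype A] [Fintype M] [DecidableEq A] [DecidableEq M]
  {μ₀ : Ω → ℝ} {f : Ω → M} {g : M → A}

lemma U_pointMass (u : A × Ω → ℝ) :
    U μ₀ u (pointMass f) (pointMass g) = ∑ ω, μ₀ ω * u (g (f ω), ω) := by
  simp only [U_eq_sum_state, sum_pointMass_mul]

lemma sbr_pointMass {uS : A × Ω → ℝ} (hμ : ∀ ω, 0 ≤ μ₀ ω)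
    (h : ∀ ω m, uS (g m, ω) ≤ uS (g (f ω), ω)) : SBR μ₀ uS (pointMass f) (pointMass g) := by
  intro σ hσ
  simp only [U_eq_sum_state, sum_pointMass_mul]
  gcongr with ω
  · exact hμ ω
  · exact (hσ ω).sum_mul_le (h ω)

lemma rbr_pointMass {uR : A × Ω → ℝ}
    (h : ∀ ω₁ a, ∑ ω with f ω = f ω₁, μ₀ ω * uR (a, ω)
      ≤ ∑ ω with f ω = f ω₁, μ₀ ω * uR (g (f ω₁), ω)) :
    RBR μ₀ uR (pointMass f) (pointMass g) := by
  intro ρ hρ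
  have hfiber : ∀ m a, ∑ ω, μ₀ ω * pointMass f ω m * uR (a, ω)
      = ∑ ω with f ω = m, μ₀ ω * uR (a, ω) := fun m a => by
    simp [Finset.sum_filter, pointMass]
  simp only [U_eq_sum_message, sum_pointMass_mul, hfiber]
  gcongr with m
  by_cases hm : ∃ ω₁, f ω₁ = m
  · obtain ⟨ω₁, rfl⟩ := hm
    exact (hρ _).sum_mul_le (h ω₁)
  · push Not at hm
    simp [hm]

end PureProfile

theorem sender_need_not_mix_general
    (Ω A M : Type) [Fintype Ω] [Fintype A] [Fintype M]
    [Nonempty Ω]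
    (hM : max (Fintype.card Ω) (Fintype.card A) < Fintype.card M)
    (μ₀ : Ω → ℝ) (hμ : IsPrior μ₀)
    (uS uR : A × Ω → ℝ)
    (hscant : ScantIndiff uS uR)
    (σ : Ω → M → ℝ) (ρ : M → A → ℝ)
    (heq : CTEq μ₀ uS uR σ ρ)
    (hopt : U μ₀ uS σ ρ = persPayoff (M := M) μ₀ uS uR)
    (hpure : PureOnPath σ ρ) :
    ∃ (σ' : Ω → M → ℝ) (ρ' : M → A → ℝ),
      Partitional σ' ∧ IsPureAct ρ' ∧
      Set.ncard {m : M | OnPath σ' m} ≤ Fintype.card A ∧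
      CTEq μ₀ uS uR σ' ρ' ∧
      U μ₀ uS σ' ρ' = persPayoff (M := M) μ₀ uS uR := by
  classical
  obtain ⟨hσ, hρ, hS, hR⟩ := heq
  obtain ⟨α, hα, hα_max⟩ :=
    exists_action_of_pureOnPath hμ.1 hscant.injective_uS hσ hρ hS hpure
  obtain ⟨ι⟩ : Nonempty (A ↪ M) :=
    Function.Embedding.nonempty_of_card_le ((le_max_right _ _).trans hM.le)
  let f : Ω → M := ι ∘ α
  -- off the range of `f` Receiver still plays an induced action, so Sender gains nothing there
  let g : M → A := Function.extend f α fun _ => α (Classical.arbitrary Ω)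
  have hgf : ∀ ω, g (f ω) = α ω := fun ω =>
    Function.FactorsThrough.extend_apply (fun _ _ h => ι.injective h) _ ω
  have hg : ∀ m, ∃ ω, g m = α ω := fun m => by
    by_cases hm : ∃ ω, f ω = m
    · obtain ⟨ω, rfl⟩ := hm
      exact ⟨ω, hgf ω⟩
    · exact ⟨_, Function.extend_apply' _ _ _ hm⟩
  refine ⟨pointMass f, pointMass g, fun ω => ⟨_, pointMass_self f ω⟩,
    fun m => ⟨_, pointMass_self g m⟩, ?_, ⟨isDist_pointMass f, isDist_pointMass g, ?_, ?_⟩, ?_⟩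
  · rw [setOf_onPath_pointMass, ← Nat.card_eq_fintype_card,
      ← Set.ncard_range_of_injective ι.injective]
    exact Set.ncard_le_ncard (Set.range_comp_subset_range α ι)
  · refine sbr_pointMass (fun ω => (hμ.1 ω).le) fun ω m => ?_
    obtain ⟨ω', hω'⟩ := hg m
    rw [hω', hgf]
    exact hα_max ω ω'
  · refine rbr_pointMass fun ω₁ a => ?_
    rw [hgf]
    simpa only [f, Function.comp_apply, ι.injective.eq_iff] using
      hR.pool hσ hρ hα (α ω₁) a
  · simp only [← hopt, U_pointMass, hgf, U_eq_of_forall_pos hσ hρ hα]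

/-- Lemma 6 (Kamenica–Lin): in a scant-indifferences environment, a pure-on-path
cheap-talk equilibrium attaining the persuasion payoff can be replaced by a
partitional, pure cheap-talk equilibrium with at most `|A|` on-path messages that
also attains the persuasion payoff. -/
theorem sender_need_not_mix
    (Ω A M : Type) [Fintype Ω] [Fintype A] [Fintype M]
    [Nonempty Ω] [Nonempty A]
    (hM : max (Fintype.card Ω) (Fintype.card A) < Fintype.card M)
    (μ₀ : Ω → ℝ) (hμ : IsPrior μ₀)
    (uS uR : A × Ω → ℝ)
    (huS : ∀ p, uS p ∈ Set.Icc (0 : ℝ) 1) (huR : ∀ p, uR p ∈ Set.Icc (0 : ℝ) 1)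
    (hscant : ScantIndiff uS uR)
    (σ : Ω → M → ℝ) (ρ : M → A → ℝ)
    (heq : CTEq μ₀ uS uR σ ρ)
    (hopt : U μ₀ uS σ ρ = persPayoff (M := M) μ₀ uS uR)
    (hpure : PureOnPath σ ρ) :
    ∃ (σ' : Ω → M → ℝ) (ρ' : M → A → ℝ),
      Partitional σ' ∧ IsPureAct ρ' ∧
      Set.ncard {m : M | OnPath σ' m} ≤ Fintype.card A ∧
      CTEq μ₀ uS uR σ' ρ' ∧
      U μ₀ uS σ' ρ' = persPayoff (M := M) μ₀ uS uR :=
  sender_need_not_mix_general Ω A M hM μ₀ hμ uS uR hscant σ ρ heq hopt hpure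

end KL
end
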